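/- For any weak composition s, the s-weak order on s-decreasing trees is a lattice, with join given by inv(T ∨ R) = tc(inv(T) ∪ inv(R)). -/

import Mathlib

/-!
An `s`-decreasing tree is determined by its inversion set: the root is the largest label `m`, and
`card(m, x)` is the index of the child of `m` containing `x`. Running this backwards, every bounded
multi inversion set that is transitive and planar is the inversion set of a tree (split the labels
below the maximum `m` according to `card(m, ·)` and recurse); transitivity and planarity are
exactly what makes the cards between different children come out right.

For trees `T` and `R` the transitive closure of `inv T ∪ inv R` is bounded, and transitive by
concatenation of paths. It is planar: if a path `c → d → ⋯ → a` jumps over `b` at a step `e → d`,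
planarity of whichever of `inv T`, `inv R` attains the union at `(e, d)` either lets the step be
replaced by `e → b`, or makes `b → d → ⋯ → a` witness `card(b, a) = s b`. So the closure is the
inversion set of a tree, and it lies below every tree above `T` and `R` because inversion sets
of trees are transitive.

Meets then come for free: the inversion sets of trees form a finite set with a least element and
binary joins, and a maximal common lower bound of `T` and `R` is the greatest one, since its join
with any other common lower bound is again a common lower bound.
-/

/-- Planar rooted trees: leaves are unlabeled; internal nodes carry a natural
number label and an ordered list of children. -/
inductive STree : Type where
  | leaf : STree
  | node : ℕ → List STree → STree

namespace STree

mutual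
  /-- `x` occurs as the label of an internal node of the tree. -/
  def mem (x : ℕ) : STree → Bool
    | .leaf => false
    | .node a cs => x == a || memL x cs
  def memL (x : ℕ) : List STree → Bool
    | [] => false
    | t :: ts => mem x t || memL x ts
end

mutual
  /-- The list of internal node labels, in preorder. -/
  def labels : STree → List ℕ
    | .leaf => []
    | .node a cs => a :: labelsL cs
  def labelsL : List STree → List ℕ
    | [] => []
    | t :: ts => labels t ++ labelsL ts
end

mutual
  /-- Local well-formedness for the signature `s` : an internal node labeled `a`
  has `s a + 1` children, and all labels below it are smaller than `a`. -/
  def wf (s : ℕ → ℕ) : STree → Prop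
    | .leaf => True
    | .node a cs => cs.length = s a + 1 ∧ (∀ b ∈ labelsL cs, b < a) ∧ wfL s cs
  def wfL (s : ℕ → ℕ) : List STree → Prop
    | [] => True
    | t :: ts => wf s t ∧ wfL s ts
end

/-- `T` is an `s`-decreasing tree: its internal nodes are labeled bijectively by
`1, …, n`, node `i` has `s i + 1` ordered children, and all descendants of a node
have smaller labels. -/
def IsSDecreasingTree (n : ℕ) (s : ℕ → ℕ) (T : STree) : Prop :=
  wf s T ∧ (labels T).Perm (List.range' 1 n)

/-- Index of the first tree of the list containing the label `x`. -/
def idxOf (x : ℕ) : List STree → ℕ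
  | [] => 0
  | t :: ts => if mem x t then 0 else idxOf x ts + 1

mutual
  /-- The cardinality `card_T(y,x)` of the pair `(y,x)` in the tree:
  `0` if `x` is (weakly) left of `y`, `i` if `x` lies in the `i`-th child
  subtree of `y`, and `s y` if `x` is right of `y`. -/
  def card (s : ℕ → ℕ) (y x : ℕ) : STree → ℕ
    | .leaf => 0
    | .node a cs => if a = y then idxOf x cs else cardL s y x cs
  def cardL (s : ℕ → ℕ) (y x : ℕ) : List STree → ℕ
    | [] => 0
    | t :: ts =>
      if mem y t then
        (if mem x t then card s y x t else if memL x ts then s y else 0)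
      else (if mem x t then 0 else cardL s y x ts)
end

/-- The tree-inversion multiset of `T`, as a multiplicity function on pairs
`(y,x)` with `1 ≤ x < y ≤ n`. -/
def treeInv (n : ℕ) (s : ℕ → ℕ) (T : STree) : ℕ → ℕ → ℕ := fun y x =>
  if 1 ≤ x ∧ x < y ∧ y ≤ n then card s y x T else 0

/-- A multi inversion set on `1, …, n` bounded by the weak composition `s`. -/
def IsMultiInvSet (n : ℕ) (s : ℕ → ℕ) (I : ℕ → ℕ → ℕ) : Prop :=
  (∀ y x, I y x ≤ s y) ∧ ∀ y x, ¬(1 ≤ x ∧ x < y ∧ y ≤ n) → I y x = 0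

/-- Transitivity: for `a < b < c`, `card(c,b) = i` implies `card(b,a) = 0` or
`card(c,a) ≥ i`. -/
def InvTransitive (I : ℕ → ℕ → ℕ) : Prop :=
  ∀ a b c : ℕ, a < b → b < c → I b a = 0 ∨ I c b ≤ I c a

/-- Planarity: for `a < b < c`, `card(c,a) = i` implies `card(b,a) = s b` or
`card(c,b) ≥ i`. -/
def InvPlanar (s : ℕ → ℕ) (I : ℕ → ℕ → ℕ) : Prop :=
  ∀ a b c : ℕ, a < b → b < c → I b a = s b ∨ I c a ≤ I c b

/-- An `s`-tree-inversion set: a bounded multi inversion set that is transitive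
and planar. -/
def IsTreeInvSet (n : ℕ) (s : ℕ → ℕ) (I : ℕ → ℕ → ℕ) : Prop :=
  IsMultiInvSet n s I ∧ InvTransitive I ∧ InvPlanar s I

/-- Inclusion of multi inversion sets: pointwise comparison of multiplicities. -/
def invLE (I J : ℕ → ℕ → ℕ) : Prop := ∀ y x, I y x ≤ J y x

/-- The `s`-weak order: inclusion of tree-inversion multisets. -/
def sWeakLE (n : ℕ) (s : ℕ → ℕ) (T R : STree) : Prop :=
  invLE (treeInv n s T) (treeInv n s R)

/-- Union of multi inversion sets: pointwise maximum. -/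
def invUnion (I J : ℕ → ℕ → ℕ) : ℕ → ℕ → ℕ := fun y x => max (I y x) (J y x)

/-- Transitive closure: `tc I (c,a)` is the maximal value of `I (b₁, b₂)` over
all transitivity paths `c = b₁ > b₂ > … > b_k = a` (consecutive entries have
positive multiplicity). -/
noncomputable def tc (I : ℕ → ℕ → ℕ) : ℕ → ℕ → ℕ := fun c a =>
  sSup {v | ∃ (b : ℕ) (l : List ℕ),
    List.Chain (fun u w => w < u ∧ 0 < I u w) c (b :: l) ∧
    (b :: l).getLast (List.cons_ne_nil b l) = a ∧ v = I c b}

/-- Adding the inversion `(c,a)`: increase its multiplicity by one. -/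
def addInv (I : ℕ → ℕ → ℕ) (c a : ℕ) : ℕ → ℕ → ℕ := fun y x =>
  if y = c ∧ x = a then I y x + 1 else I y x

mutual
  /-- `a` is a (proper) descendant of the node labeled `c`. -/
  def descIn (c a : ℕ) : STree → Bool
    | .leaf => false
    | .node b cs => (b == c && memL a cs) || descInL c a cs
  def descInL (c a : ℕ) : List STree → Bool
    | [] => false
    | t :: ts => descIn c a t || descInL c a ts
end

mutual
  /-- `a` belongs to the rightmost child subtree of the node labeled `c`. -/
  def inRight (c a : ℕ) : STree → Bool
    | .leaf => false
    | .node b cs =>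
      (b == c && (match cs.getLast? with
        | some t => mem a t
        | none => false)) || inRightL c a cs
  def inRightL (c a : ℕ) : List STree → Bool
    | [] => false
    | t :: ts => inRight c a t || inRightL c a ts
end

mutual
  /-- `a` belongs to the leftmost child subtree of the node labeled `c`. -/
  def inLeft (c a : ℕ) : STree → Bool
    | .leaf => false
    | .node b cs =>
      (b == c && (match cs.head? with
        | some t => mem a t
        | none => false)) || inLeftL c a cs
  def inLeftL (c a : ℕ) : List STree → Bool
    | [] => false
    | t :: ts => inLeft c a t || inLeftL c a ts
end

mutual
  /-- The rightmost child subtree of the node labeled `a` is empty (a leaf). -/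
  def rightEmpty (a : ℕ) : STree → Bool
    | .leaf => false
    | .node b cs =>
      (b == a && (match cs.getLast? with
        | some .leaf => true
        | _ => false)) || rightEmptyL a cs
  def rightEmptyL (a : ℕ) : List STree → Bool
    | [] => false
    | t :: ts => rightEmpty a t || rightEmptyL a ts
end

/-- `(a,c)` is a tree-ascent of `T`: `a` is a descendant of `c`, not in the
rightmost subtree of `c`; `a` lies in the rightmost subtree of any `b` with
`a < b < c` having `a` as a descendant; and if `s a > 0` the rightmost
(strict right) subtree of `a` is empty. -/
def IsTreeAscent (s : ℕ → ℕ) (T : STree) (a c : ℕ) : Prop :=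
  a < c ∧ descIn c a T = true ∧ inRight c a T = false ∧
  (∀ b : ℕ, a < b → b < c → descIn b a T = true → inRight b a T = true) ∧
  (0 < s a → rightEmpty a T = true)

/-- `a` is the root label of the tree. -/
def hasRoot (a : ℕ) : STree → Bool
  | .leaf => false
  | .node b _ => a == b

mutual
  /-- `a` is a direct child of the node `c`, but not its rightmost child. -/
  def nonRightChild (c a : ℕ) : STree → Bool
    | .leaf => false
    | .node b cs => (b == c && cs.dropLast.any (hasRoot a)) || nonRightChildL c a cs
  def nonRightChildL (c a : ℕ) : List STree → Bool
    | [] => false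
    | t :: ts => nonRightChild c a t || nonRightChildL c a ts
end

/-- `(a,c)` is a Tamari-ascent of `T`: `a` is a non-right child of `c`. -/
def IsTamariAscent (T : STree) (a c : ℕ) : Prop :=
  a < c ∧ nonRightChild c a T = true

mutual
  /-- Horizontal mirror image of a tree: the order of children is reversed at
  every internal node. -/
  def mirror : STree → STree
    | .leaf => .leaf
    | .node a cs => .node a (mirrorL cs)
  def mirrorL : List STree → List STree
    | [] => []
    | t :: ts => mirrorL ts ++ [mirror t]
end

/-- `T` is an `s`-Tamari tree: `card(c,a) ≤ card(c,b)` for all `a < b < c`. -/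
def TamariProp (n : ℕ) (s : ℕ → ℕ) (T : STree) : Prop :=
  ∀ a b c : ℕ, a < b → b < c → treeInv n s T c a ≤ treeInv n s T c b

/-- `T` is an `s`-maximal-Tamari tree: `card(b,a) = s b` implies
`card(c,a) = s c` for all `c > b`. -/
def MaxTamariProp (n : ℕ) (s : ℕ → ℕ) (T : STree) : Prop :=
  ∀ a b c : ℕ, 1 ≤ a → a < b → b < c → c ≤ n →
    treeInv n s T b a = s b → treeInv n s T c a = s c

/-- The projection `π↓` on inversion sets:
`card_Q(c,a) = min { card_T(c,b) : a ≤ b < c }`. -/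
noncomputable def pidownInv (n : ℕ) (s : ℕ → ℕ) (T : STree) : ℕ → ℕ → ℕ :=
  fun c a => sInf {v | ∃ b : ℕ, a ≤ b ∧ b < c ∧ v = treeInv n s T c b}

open scoped Classical in
/-- The projection `π↑` on inversion sets: `card_R(c,a) = s c` if there is
`a < b < c` with `card_T(b,a) = s b`, and `card_R(c,a) = card_T(c,a)` otherwise. -/
noncomputable def piupInv (n : ℕ) (s : ℕ → ℕ) (T : STree) : ℕ → ℕ → ℕ :=
  fun c a =>
    if 1 ≤ a ∧ a < c ∧ c ≤ n then
      if ∃ b : ℕ, a < b ∧ b < c ∧ treeInv n s T b a = s b then s c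
      else treeInv n s T c a
    else 0

end STree

theorem Set.Finite.exists_meet_of_exists_join {α : Type*} [Preorder α] {S : Set α}
    (hS : S.Finite)
    (hjoin : ∀ x ∈ S, ∀ y ∈ S, ∃ z ∈ S, x ≤ z ∧ y ≤ z ∧ ∀ w ∈ S, x ≤ w → y ≤ w → z ≤ w)
    {x y : α} (hx : x ∈ S) (hy : y ∈ S) (hlow : ∃ b ∈ S, b ≤ x ∧ b ≤ y) :
    ∃ m ∈ S, m ≤ x ∧ m ≤ y ∧ ∀ w ∈ S, w ≤ x → w ≤ y → w ≤ m := by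
  obtain ⟨m, ⟨hm, hmx, hmy⟩, hmax⟩ :=
    (hS.subset (Set.sep_subset S fun w => w ≤ x ∧ w ≤ y)).exists_maximal hlow
  refine ⟨m, hm, hmx, hmy, fun w hw hwx hwy => ?_⟩
  obtain ⟨j, hj, hmj, hwj, hjmin⟩ := hjoin m hm w hw
  exact hwj.trans (hmax ⟨hj, hjmin x hx hmx hwx, hjmin y hy hmy hwy⟩ hmj)

namespace STree

open Relation

variable {n : ℕ} {s : ℕ → ℕ}

@[elab_as_elim]
theorem induction {motive : STree → Prop} (leaf : motive .leaf)
    (node : ∀ a cs, (∀ t ∈ cs, motive t) → motive (.node a cs)) : ∀ t, motive t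
  | .leaf => leaf
  | .node a cs => node a cs fun t _ => induction leaf node t
termination_by t => sizeOf t
decreasing_by
  have := List.sizeOf_lt_of_mem ‹t ∈ cs›
  simp only [STree.node.sizeOf_spec]
  omega

theorem memL_eq_any (x : ℕ) (cs : List STree) : memL x cs = cs.any (mem x) := by
  induction cs with
  | nil => simp [memL]
  | cons t ts ih => simp [memL, ih]

theorem labelsL_eq_flatMap (cs : List STree) : labelsL cs = cs.flatMap labels := by
  induction cs with
  | nil => simp [labelsL]
  | cons t ts ih => simp [labelsL, ih]

theorem wfL_iff {cs : List STree} : wfL s cs ↔ ∀ t ∈ cs, wf s t := by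
  induction cs with
  | nil => simp [wfL]
  | cons t ts ih => simp [wfL, ih]

@[simp]
theorem mem_eq_true_iff (x : ℕ) (t : STree) : mem x t = true ↔ x ∈ labels t := by
  induction t using induction with
  | leaf => simp [mem, labels]
  | node a cs ih =>
    simp only [mem, labels, labelsL_eq_flatMap, memL_eq_any, Bool.or_eq_true, beq_iff_eq,
      List.any_eq_true, List.mem_cons, List.mem_flatMap]
    exact or_congr Iff.rfl (exists_congr fun t => and_congr_right (ih t))

@[simp]
theorem memL_eq_true_iff (x : ℕ) (cs : List STree) : memL x cs = true ↔ x ∈ labelsL cs := by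
  simp [memL_eq_any, labelsL_eq_flatMap]

theorem idxOf_lt_length_iff {x : ℕ} {cs : List STree} :
    idxOf x cs < cs.length ↔ x ∈ labelsL cs := by
  induction cs with
  | nil => simp [idxOf, labelsL]
  | cons t ts ih =>
    by_cases hx : x ∈ labels t <;> simp [idxOf, labelsL, hx, ih]

theorem mem_labels_getElem_of_idxOf_eq {x i : ℕ} {cs : List STree} (hx : idxOf x cs = i)
    (hi : i < cs.length) : x ∈ labels cs[i] := by
  induction cs generalizing i with
  | nil => simp at hi
  | cons t ts ih =>
    by_cases hxt : x ∈ labels t <;> simp only [idxOf, mem_eq_true_iff, hxt, if_true,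
      if_false] at hx <;> subst hx
    · simpa using hxt
    · exact ih rfl (by simpa using hi)

theorem idxOf_eq_of_mem_labels_getElem {x i : ℕ} {cs : List STree} (hi : i < cs.length)
    (hx : x ∈ labels cs[i]) (hfirst : ∀ j (hj : j < i), x ∉ labels (cs[j]'(hj.trans hi))) :
    idxOf x cs = i := by
  induction cs generalizing i with
  | nil => simp at hi
  | cons t ts ih =>
    cases i with
    | zero => simp_all [idxOf]
    | succ i =>
      have hxt : x ∉ labels t := hfirst 0 (Nat.succ_pos i)
      simp only [idxOf, mem_eq_true_iff, hxt, if_false, Nat.add_right_cancel_iff]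
      exact ih (by simpa using hi) hx fun j hj => hfirst (j + 1) (by omega)

theorem cardL_of_idxOf_lt {y x : ℕ} {cs : List STree}
    (h : idxOf x cs < idxOf y cs) : cardL s y x cs = 0 := by
  induction cs with
  | nil => rfl
  | cons t ts ih =>
    by_cases hxt : x ∈ labels t <;> by_cases hyt : y ∈ labels t <;>
      simp_all [idxOf, cardL]

theorem cardL_of_idxOf_gt {y x : ℕ} {cs : List STree}
    (h : idxOf y cs < idxOf x cs) (hx : idxOf x cs < cs.length) : cardL s y x cs = s y := by
  induction cs with
  | nil => simp at hx
  | cons t ts ih =>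
    by_cases hxt : x ∈ labels t <;> by_cases hyt : y ∈ labels t <;>
      simp_all [idxOf, cardL, ← idxOf_lt_length_iff]

theorem cardL_of_idxOf_eq {y x i : ℕ} {cs : List STree} (hx : idxOf x cs = i)
    (hy : idxOf y cs = i) (hi : i < cs.length) : cardL s y x cs = card s y x cs[i] := by
  induction cs generalizing i with
  | nil => simp at hi
  | cons t ts ih =>
    by_cases hxt : x ∈ labels t <;> by_cases hyt : y ∈ labels t <;>
      simp only [idxOf, mem_eq_true_iff, hxt, hyt, if_true, if_false] at hx hy <;> subst hx
    · simp [cardL, hxt, hyt]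
    · omega
    · omega
    · simp only [cardL, mem_eq_true_iff, hxt, hyt, if_false, List.getElem_cons_succ]
      exact ih rfl (by omega) (by simpa using hi)

theorem cardL_le {y x : ℕ} {cs : List STree}
    (h : ∀ t ∈ cs, x ∈ labels t → card s y x t ≤ s y) : cardL s y x cs ≤ s y := by
  induction cs with
  | nil => simp [cardL]
  | cons t ts ih =>
    simp only [cardL, mem_eq_true_iff]
    split_ifs <;> simp_all

theorem card_le {y x : ℕ} {t : STree} (hwf : wf s t) (hx : x ∈ labels t)
    (hxy : x ≠ y) : card s y x t ≤ s y := by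
  induction t using induction with
  | leaf => simp [labels] at hx
  | node a cs ih =>
    obtain ⟨hlen, -, hwfL⟩ := hwf
    rw [wfL_iff] at hwfL
    simp only [card]
    split_ifs with hay
    · subst hay
      have : idxOf x cs < cs.length := by
        rw [idxOf_lt_length_iff]; simpa [labels, hxy] using hx
      omega
    · exact cardL_le fun u hu hxu => ih u hu (hwfL u hu) hxu

theorem mem_labelsL_of_lt {m z c : ℕ} {cs : List STree} (hbelow : ∀ b ∈ labelsL cs, b < m)
    (hz : z ∈ labels (.node m cs)) (hc : c ∈ labels (.node m cs)) (hzc : z < c) :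
    z ∈ labelsL cs := by
  simp only [labels, List.mem_cons] at hz hc
  rcases hc with rfl | hc
  · exact hz.resolve_left hzc.ne
  · exact hz.resolve_left (hzc.trans (hbelow c hc)).ne

theorem card_transitive {t : STree} (hwf : wf s t) {a b c : ℕ} (hab : a < b)
    (hbc : b < c) (ha : a ∈ labels t) (hb : b ∈ labels t) (hc : c ∈ labels t) :
    card s b a t = 0 ∨ card s c b t ≤ card s c a t := by
  induction t using induction with
  | leaf => simp [labels] at ha
  | node m cs ih =>
    obtain ⟨-, hbelow, hwfL⟩ := hwf
    rw [wfL_iff] at hwfL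
    have ha' := idxOf_lt_length_iff.2 (mem_labelsL_of_lt hbelow ha hc (hab.trans hbc))
    have hb' := idxOf_lt_length_iff.2 (mem_labelsL_of_lt hbelow hb hc hbc)
    by_cases hcm : m = c
    · simp only [card, hcm, if_true, if_neg hbc.ne']
      by_cases h : idxOf a cs < idxOf b cs
      · exact Or.inl (cardL_of_idxOf_lt h)
      · exact Or.inr (by omega)
    have hcL : c ∈ labelsL cs := by simpa [labels, Ne.symm hcm] using hc
    have hc' := idxOf_lt_length_iff.2 hcL
    have hcm' := hbelow c hcL
    simp only [card, if_neg hcm, if_neg (show m ≠ b by omega)]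
    rcases lt_trichotomy (idxOf b cs) (idxOf c cs) with hbc' | hbc' | hbc'
    · rw [cardL_of_idxOf_lt hbc']
      exact Or.inr (Nat.zero_le _)
    · rcases lt_trichotomy (idxOf a cs) (idxOf b cs) with hab' | hab' | hab'
      · exact Or.inl (cardL_of_idxOf_lt hab')
      · rw [cardL_of_idxOf_eq hab' rfl hb', cardL_of_idxOf_eq hbc' rfl hc',
          cardL_of_idxOf_eq (hab'.trans hbc') rfl hc']
        simp only [← hbc']
        exact ih _ (List.getElem_mem hb') (hwfL _ (List.getElem_mem hb'))
          (mem_labels_getElem_of_idxOf_eq hab' hb') (mem_labels_getElem_of_idxOf_eq rfl hb')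
          (mem_labels_getElem_of_idxOf_eq hbc'.symm hb')
      · rw [cardL_of_idxOf_gt (x := a) (y := c) (by omega) ha']
        exact Or.inr (cardL_le fun u hu hbu => card_le (hwfL u hu) hbu hbc.ne)
    · by_cases hca : idxOf c cs < idxOf a cs
      · rw [cardL_of_idxOf_gt hbc' hb', cardL_of_idxOf_gt hca ha']
        exact Or.inr le_rfl
      · exact Or.inl (cardL_of_idxOf_lt (by omega))

theorem card_planar {t : STree} (hwf : wf s t) {a b c : ℕ} (hab : a < b)
    (hbc : b < c) (ha : a ∈ labels t) (hb : b ∈ labels t) (hc : c ∈ labels t) :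
    card s b a t = s b ∨ card s c a t ≤ card s c b t := by
  induction t using induction with
  | leaf => simp [labels] at ha
  | node m cs ih =>
    obtain ⟨-, hbelow, hwfL⟩ := hwf
    rw [wfL_iff] at hwfL
    have ha' := idxOf_lt_length_iff.2 (mem_labelsL_of_lt hbelow ha hc (hab.trans hbc))
    have hb' := idxOf_lt_length_iff.2 (mem_labelsL_of_lt hbelow hb hc hbc)
    by_cases hcm : m = c
    · simp only [card, hcm, if_true, if_neg hbc.ne']
      by_cases h : idxOf b cs < idxOf a cs
      · exact Or.inl (cardL_of_idxOf_gt h ha')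
      · exact Or.inr (by omega)
    have hcL : c ∈ labelsL cs := by simpa [labels, Ne.symm hcm] using hc
    have hc' := idxOf_lt_length_iff.2 hcL
    have hcm' := hbelow c hcL
    simp only [card, if_neg hcm, if_neg (show m ≠ b by omega)]
    rcases lt_trichotomy (idxOf b cs) (idxOf c cs) with hbc' | hbc' | hbc'
    · by_cases hba : idxOf b cs < idxOf a cs
      · exact Or.inl (cardL_of_idxOf_gt hba ha')
      · rw [cardL_of_idxOf_lt (x := a) (y := c) (by omega)]
        exact Or.inr (Nat.zero_le _)
    · rcases lt_trichotomy (idxOf a cs) (idxOf b cs) with hab' | hab' | hab'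
      · rw [cardL_of_idxOf_lt (x := a) (y := c) (by omega)]
        exact Or.inr (Nat.zero_le _)
      · rw [cardL_of_idxOf_eq hab' rfl hb', cardL_of_idxOf_eq hbc' rfl hc',
          cardL_of_idxOf_eq (hab'.trans hbc') rfl hc']
        simp only [← hbc']
        exact ih _ (List.getElem_mem hb') (hwfL _ (List.getElem_mem hb'))
          (mem_labels_getElem_of_idxOf_eq hab' hb') (mem_labels_getElem_of_idxOf_eq rfl hb')
          (mem_labels_getElem_of_idxOf_eq hbc'.symm hb')
      · exact Or.inl (cardL_of_idxOf_gt hab' ha')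
    · rw [cardL_of_idxOf_gt hbc' hb']
      exact Or.inr (cardL_le fun u hu hau => card_le (hwfL u hu) hau (hab.trans hbc).ne)

theorem IsSDecreasingTree.mem_labels_iff {T : STree}
    (hT : IsSDecreasingTree n s T) {x : ℕ} : x ∈ labels T ↔ 1 ≤ x ∧ x ≤ n := by
  rw [hT.2.mem_iff, List.mem_range'_1]
  omega

theorem treeInv_eq_card {T : STree} {y x : ℕ}
    (h : 1 ≤ x ∧ x < y ∧ y ≤ n) : treeInv n s T y x = card s y x T :=
  if_pos h

theorem treeInv_isTreeInvSet {T : STree} (hT : IsSDecreasingTree n s T) :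
    IsTreeInvSet n s (treeInv n s T) := by
  have hmem : ∀ {x}, 1 ≤ x → x ≤ n → x ∈ labels T := fun h1 h2 => hT.mem_labels_iff.2 ⟨h1, h2⟩
  refine ⟨⟨fun y x => ?_, fun y x h => if_neg h⟩, fun a b c hab hbc => ?_,
    fun a b c hab hbc => ?_⟩
  · unfold treeInv
    split_ifs with h
    · exact card_le hT.1 (hmem h.1 (by omega)) h.2.1.ne
    · exact Nat.zero_le _
  · by_cases h : 1 ≤ a ∧ c ≤ n
    · rw [treeInv_eq_card (x := a) (y := b) (by omega),
        treeInv_eq_card (x := b) (y := c) (by omega), treeInv_eq_card (x := a) (y := c) (by omega)]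
      exact card_transitive hT.1 hab hbc (hmem h.1 (by omega)) (hmem (by omega) (by omega))
        (hmem (by omega) h.2)
    · unfold treeInv
      split_ifs <;> omega
  · by_cases h : 1 ≤ a ∧ c ≤ n
    · rw [treeInv_eq_card (x := a) (y := b) (by omega),
        treeInv_eq_card (x := a) (y := c) (by omega), treeInv_eq_card (x := b) (y := c) (by omega)]
      exact card_planar hT.1 hab hbc (hmem h.1 (by omega)) (hmem (by omega) (by omega))
        (hmem (by omega) h.2)
    · unfold treeInv
      split_ifs <;> omega

section Reconstruction

variable {K : ℕ → ℕ → ℕ}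

structure Realizes (s : ℕ → ℕ) (K : ℕ → ℕ → ℕ) (A : Finset ℕ) (t : STree) : Prop where
  wellFormed : wf s t
  nodup : (labels t).Nodup
  mem_labels : ∀ z, z ∈ labels t ↔ z ∈ A
  card_eq : ∀ x ∈ A, ∀ y ∈ A, x < y → card s y x t = K y x

theorem idxOf_map_range {f : ℕ → STree} {k i x : ℕ} (hi : i < k) (hx : x ∈ labels (f i))
    (hfirst : ∀ j < i, x ∉ labels (f j)) : idxOf x ((List.range k).map f) = i :=
  idxOf_eq_of_mem_labels_getElem (by simpa using hi) (by simpa using hx)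
    fun j hj => by simpa using hfirst j hj

theorem card_node_eq (htr : InvTransitive K) (hpl : InvPlanar s K)
    {m : ℕ} {cs : List STree} (hbelow : ∀ z ∈ labelsL cs, z < m)
    (hidx : ∀ z ∈ labelsL cs, idxOf z cs = K m z)
    (hchild : ∀ u ∈ cs, ∀ x ∈ labels u, ∀ y ∈ labels u, x < y → card s y x u = K y x)
    {x y : ℕ} (hx : x ∈ labelsL cs) (hy : y ∈ labels (.node m cs)) (hxy : x < y) :
    card s y x (.node m cs) = K y x := by
  simp only [card]
  split_ifs with hmy
  · exact hmy ▸ hidx x hx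
  have hyL : y ∈ labelsL cs := by simpa [labels, Ne.symm hmy] using hy
  have hym := hbelow y hyL
  have hx' := idxOf_lt_length_iff.2 hx
  rcases lt_trichotomy (K m x) (K m y) with h | h | h
  · rw [cardL_of_idxOf_lt (by rwa [hidx x hx, hidx y hyL])]
    exact ((htr x y m hxy hym).resolve_right (by omega)).symm
  · rw [cardL_of_idxOf_eq (hidx x hx) (hidx y hyL ▸ h.symm) (hidx x hx ▸ hx')]
    exact hchild _ (List.getElem_mem _) x (mem_labels_getElem_of_idxOf_eq (hidx x hx) _) y
      (mem_labels_getElem_of_idxOf_eq (hidx y hyL ▸ h.symm) _) hxy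
  · rw [cardL_of_idxOf_gt (by rwa [hidx x hx, hidx y hyL]) hx']
    exact ((hpl x y m hxy hym).resolve_right (by omega)).symm

theorem mem_labelsL_map_range {f : ℕ → STree} {k z : ℕ} :
    z ∈ labelsL ((List.range k).map f) ↔ ∃ i < k, z ∈ labels (f i) := by
  simp [labelsL_eq_flatMap]

theorem nodup_labelsL_map_range {f : ℕ → STree} {k : ℕ} (hnd : ∀ i, (labels (f i)).Nodup)
    (hdisj : ∀ i j z, z ∈ labels (f i) → z ∈ labels (f j) → i = j) :
    (labelsL ((List.range k).map f)).Nodup := by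
  rw [labelsL_eq_flatMap, List.nodup_flatMap, List.pairwise_map]
  exact ⟨by simpa using fun i _ => hnd i,
    List.nodup_range.imp fun hij z hzi hzj => hij (hdisj _ _ z hzi hzj)⟩

theorem realizes_node (hbd : ∀ y x, K y x ≤ s y) (htr : InvTransitive K) (hpl : InvPlanar s K)
    {A : Finset ℕ} {m : ℕ} (hm : m ∈ A) (hmax : ∀ z ∈ A, z ≤ m) {f : ℕ → STree}
    (hf : ∀ i, Realizes s K ((A.erase m).filter (K m · = i)) (f i)) :
    Realizes s K A (.node m ((List.range (s m + 1)).map f)) := by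
  set cs := (List.range (s m + 1)).map f
  have hmemf : ∀ i z, z ∈ labels (f i) ↔ z ≠ m ∧ z ∈ A ∧ K m z = i := fun i z => by
    simp [(hf i).mem_labels, and_assoc]
  have hmemL : ∀ z, z ∈ labelsL cs ↔ z ≠ m ∧ z ∈ A := fun z => by
    simp only [cs, mem_labelsL_map_range, hmemf]
    exact ⟨fun ⟨_, _, hzm, hzA, _⟩ => ⟨hzm, hzA⟩,
      fun ⟨hzm, hzA⟩ => ⟨K m z, Nat.lt_succ_of_le (hbd m z), hzm, hzA, rfl⟩⟩
  have hbelow : ∀ z ∈ labelsL cs, z < m := fun z hz =>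
    lt_of_le_of_ne (hmax z ((hmemL z).1 hz).2) ((hmemL z).1 hz).1
  have hidx : ∀ z ∈ labelsL cs, idxOf z cs = K m z := fun z hz =>
    idxOf_map_range (Nat.lt_succ_of_le (hbd m z)) ((hmemf _ z).2 ⟨((hmemL z).1 hz).1,
      ((hmemL z).1 hz).2, rfl⟩) fun j hj hzj => hj.ne ((hmemf j z).1 hzj).2.2.symm
  have hchild : ∀ u ∈ cs, ∀ x ∈ labels u, ∀ y ∈ labels u, x < y → card s y x u = K y x := by
    simp only [cs, List.mem_map, List.mem_range]
    rintro _ ⟨i, -, rfl⟩ x hx y hy hxy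
    exact (hf i).card_eq x ((hf i).mem_labels x |>.1 hx) y ((hf i).mem_labels y |>.1 hy) hxy
  have hlabels : ∀ z, z ∈ labels (.node m cs) ↔ z ∈ A := fun z => by
    by_cases hz : z = m <;> simp [labels, hmemL, hz, hm]
  refine ⟨⟨by simp [cs], hbelow, wfL_iff.2 ?_⟩, ?_, hlabels, ?_⟩
  · simp only [cs, List.mem_map, List.mem_range]
    rintro _ ⟨i, -, rfl⟩
    exact (hf i).wellFormed
  · refine List.nodup_cons.2 ⟨fun h => ((hmemL m).1 h).1 rfl, ?_⟩
    exact nodup_labelsL_map_range (fun i => (hf i).nodup) fun i j z hzi hzj =>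
      ((hmemf i z).1 hzi).2.2.symm.trans ((hmemf j z).1 hzj).2.2
  · intro x hx y hy hxy
    exact card_node_eq htr hpl hbelow hidx hchild
      ((hmemL x).2 ⟨(hxy.trans_le (hmax y hy)).ne, hx⟩) ((hlabels y).2 hy) hxy

theorem exists_realizes (hbd : ∀ y x, K y x ≤ s y) (htr : InvTransitive K)
    (hpl : InvPlanar s K) (A : Finset ℕ) : ∃ t, Realizes s K A t := by
  induction A using Finset.strongInduction with
  | H A ih =>
    rcases A.eq_empty_or_nonempty with rfl | hne
    · exact ⟨.leaf, trivial, List.nodup_nil, by simp [labels], by simp⟩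
    have hm := A.max'_mem hne
    have hsub : ∀ i, (A.erase (A.max' hne)).filter (K (A.max' hne) · = i) ⊂ A := fun i =>
      (Finset.filter_subset _ _).trans_ssubset (Finset.erase_ssubset hm)
    choose f hf using fun i => ih _ (hsub i)
    exact ⟨_, realizes_node hbd htr hpl hm (fun z hz => A.le_max' z hz) hf⟩

theorem exists_treeInv_eq {I : ℕ → ℕ → ℕ} (hI : IsTreeInvSet n s I) :
    ∃ T, IsSDecreasingTree n s T ∧ treeInv n s T = I := by
  obtain ⟨⟨hbd, hsupp⟩, htr, hpl⟩ := hI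
  obtain ⟨T, hT⟩ := exists_realizes hbd htr hpl (List.range' 1 n).toFinset
  have hmem : ∀ z, z ∈ (List.range' 1 n).toFinset ↔ 1 ≤ z ∧ z ≤ n := fun z => by
    rw [List.mem_toFinset, List.mem_range'_1]
    omega
  refine ⟨T, ⟨hT.wellFormed, List.perm_of_nodup_nodup_toFinset_eq hT.nodup List.nodup_range'
    (by ext z; simp only [List.mem_toFinset, hT.mem_labels])⟩, funext fun y => funext fun x => ?_⟩
  by_cases h : 1 ≤ x ∧ x < y ∧ y ≤ n
  · rw [treeInv_eq_card h]
    exact hT.card_eq x ((hmem x).2 (by omega)) y ((hmem y).2 (by omega)) h.2.1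
  · rw [hsupp y x h]
    exact if_neg h

end Reconstruction

def TcStep (I : ℕ → ℕ → ℕ) (u w : ℕ) : Prop := w < u ∧ 0 < I u w

def IsSupOfPlanar (s : ℕ → ℕ) (I : ℕ → ℕ → ℕ) : Prop :=
  ∀ e d, ∃ W, InvPlanar s W ∧ W ≤ I ∧ W e d = I e d

theorem tc_eq_sSup (I : ℕ → ℕ → ℕ) (c a : ℕ) :
    tc I c a = sSup {v | ∃ b, TcStep I c b ∧ ReflTransGen (TcStep I) b a ∧ v = I c b} := by
  unfold tc
  congr 1
  ext v
  constructor
  · rintro ⟨b, l, hch, hl, rfl⟩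
    rw [List.Chain, List.isChain_cons_cons] at hch
    exact ⟨b, hch.1, List.relationReflTransGen_of_exists_isChain_cons l hch.2 hl, rfl⟩
  · rintro ⟨b, hcb, hba, rfl⟩
    obtain ⟨l, hch, hl⟩ := List.exists_isChain_cons_of_relationReflTransGen hba
    exact ⟨b, l, List.isChain_cons_cons.2 ⟨hcb, hch⟩, hl, rfl⟩

theorem bddAbove_tcValues (I : ℕ → ℕ → ℕ) (c a : ℕ) :
    BddAbove {v | ∃ b, TcStep I c b ∧ ReflTransGen (TcStep I) b a ∧ v = I c b} :=
  ⟨(Finset.range c).sup (I c), by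
    rintro _ ⟨b, hcb, -, rfl⟩
    exact Finset.le_sup (f := I c) (Finset.mem_range.2 hcb.1)⟩

section TransitiveClosure

variable {I : ℕ → ℕ → ℕ}

theorem le_tc {c b a : ℕ} (hcb : TcStep I c b) (hba : ReflTransGen (TcStep I) b a) :
    I c b ≤ tc I c a := by
  rw [tc_eq_sSup]
  exact le_csSup (bddAbove_tcValues I c a) ⟨b, hcb, hba, rfl⟩

theorem tc_le {c a v : ℕ} (h : ∀ b, TcStep I c b → ReflTransGen (TcStep I) b a → I c b ≤ v) :
    tc I c a ≤ v := by
  rw [tc_eq_sSup]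
  exact csSup_le' (by rintro _ ⟨b, hcb, hba, rfl⟩; exact h b hcb hba)

theorem exists_eq_tc {c a : ℕ} (h : tc I c a ≠ 0) :
    ∃ b, TcStep I c b ∧ ReflTransGen (TcStep I) b a ∧ tc I c a = I c b := by
  rw [tc_eq_sSup] at h ⊢
  have hne : {v | ∃ b, TcStep I c b ∧ ReflTransGen (TcStep I) b a ∧ v = I c b}.Nonempty := by
    by_contra hemp
    rw [Set.not_nonempty_iff_eq_empty] at hemp
    simp [hemp] at h
  exact Nat.sSup_mem hne (bddAbove_tcValues I c a)

theorem le_of_reflTransGen_tcStep {b a : ℕ} (h : ReflTransGen (TcStep I) b a) : a ≤ b := by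
  induction h with
  | refl => exact le_rfl
  | tail _ hstep ih => exact hstep.1.le.trans ih

theorem tc_le_bound (hbd : ∀ y x, I y x ≤ s y) (c a : ℕ) : tc I c a ≤ s c :=
  tc_le fun b _ _ => hbd c b

theorem IsMultiInvSet.bounds_of_pos (hI : IsMultiInvSet n s I) {y x : ℕ} (h : 0 < I y x) :
    1 ≤ x ∧ x < y ∧ y ≤ n :=
  not_not.1 fun hn => h.ne' (hI.2 y x hn)

theorem le_tc_self (hI : IsMultiInvSet n s I) : I ≤ tc I := by
  intro y x
  rcases Nat.eq_zero_or_pos (I y x) with h | h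
  · exact h ▸ Nat.zero_le _
  · exact le_tc ⟨(hI.bounds_of_pos h).2.1, h⟩ ReflTransGen.refl

theorem tc_le_of_le {V : ℕ → ℕ → ℕ} (hIV : I ≤ V) (hV : InvTransitive V) : tc I ≤ V := by
  have descend : ∀ {c b a}, ReflTransGen (TcStep I) b a → b < c → V c b ≤ V c a := by
    intro c b a hba hbc
    induction hba with
    | refl => exact le_rfl
    | @tail m a' hbm hstep ih =>
      have hmc : m < c := (le_of_reflTransGen_tcStep hbm).trans_lt hbc
      exact ih.trans ((hV a' m c hstep.1 hmc).resolve_left (hstep.2.trans_le (hIV m a')).ne')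
  intro c a
  exact tc_le fun b hcb hba => (hIV c b).trans (descend hba hcb.1)

theorem tc_isMultiInvSet (hI : IsMultiInvSet n s I) : IsMultiInvSet n s (tc I) := by
  refine ⟨fun c a => tc_le_bound hI.1 c a, fun c a hca => ?_⟩
  by_contra h
  obtain ⟨b, hcb, hba, -⟩ := exists_eq_tc h
  have ha : 1 ≤ a := by
    rcases hba.cases_tail with rfl | ⟨m, -, hma⟩
    · exact (hI.bounds_of_pos hcb.2).1
    · exact (hI.bounds_of_pos hma.2).1
  exact hca ⟨ha, (le_of_reflTransGen_tcStep hba).trans_lt hcb.1, (hI.bounds_of_pos hcb.2).2.2⟩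

theorem tc_transitive : InvTransitive (tc I) := by
  intro a b c _ _
  by_cases hba : tc I b a = 0
  · exact Or.inl hba
  by_cases hcb : tc I c b = 0
  · exact Or.inr (hcb ▸ Nat.zero_le _)
  obtain ⟨e, hbe, hea, -⟩ := exists_eq_tc hba
  obtain ⟨d, hcd, hdb, heq⟩ := exists_eq_tc hcb
  exact Or.inr (heq ▸ le_tc hcd (hdb.trans (ReflTransGen.head hbe hea)))

/-- A step `e → d` of a path to `a` that jumps over `b` can be replaced by the step `e → b`,
unless `b → d → ⋯ → a` already makes `(b, a)` a full inversion. -/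
theorem le_or_le_tc (hsup : IsSupOfPlanar s I)
    {e d b a : ℕ} (hdb : d < b) (hbe : b < e) (hda : ReflTransGen (TcStep I) d a) :
    I e d ≤ I e b ∨ s b ≤ tc I b a := by
  obtain ⟨W, hW, hWI, hWed⟩ := hsup e d
  rcases hW d b e hdb hbe with hWbd | hWe
  · refine Or.inr ?_
    rcases Nat.eq_zero_or_pos (s b) with hs | hs
    · exact hs ▸ Nat.zero_le _
    calc s b = W b d := hWbd.symm
      _ ≤ I b d := hWI b d
      _ ≤ tc I b a := le_tc ⟨hdb, hs.trans_le (hWbd ▸ hWI b d)⟩ hda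
  · exact Or.inl (hWed ▸ hWe.trans (hWI e b))

theorem reflTransGen_or_le_tc (hsup : IsSupOfPlanar s I)
    {d a b : ℕ} (hda : ReflTransGen (TcStep I) d a) (hab : a ≤ b) (hbd : b ≤ d) :
    ReflTransGen (TcStep I) d b ∨ s b ≤ tc I b a := by
  induction hda using ReflTransGen.head_induction_on with
  | refl => exact Or.inl (le_antisymm hbd hab ▸ ReflTransGen.refl)
  | @head d d' hdd' hd'a ih =>
    rcases hbd.eq_or_lt with rfl | hbd
    · exact Or.inl ReflTransGen.refl
    rcases le_or_gt b d' with hbd' | hd'b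
    · exact (ih hbd').imp_left (ReflTransGen.head hdd')
    · exact (le_or_le_tc hsup hd'b hbd hd'a).imp_left fun hle =>
        ReflTransGen.single ⟨hbd, hdd'.2.trans_le hle⟩

theorem tc_planar (hbd : ∀ y x, I y x ≤ s y)
    (hsup : IsSupOfPlanar s I) : InvPlanar s (tc I) := by
  intro a b c hab hbc
  by_cases h0 : tc I c a = 0
  · exact Or.inr (h0 ▸ Nat.zero_le _)
  obtain ⟨d, hcd, hda, heq⟩ := exists_eq_tc h0
  have hfull : s b ≤ tc I b a → tc I b a = s b := (le_antisymm (tc_le_bound hbd b a) ·)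
  rcases lt_or_ge d b with hdb | hbd'
  · rcases le_or_le_tc hsup hdb hbc hda with hle | hsb
    · exact Or.inr (heq ▸ hle.trans (le_tc ⟨hbc, hcd.2.trans_le hle⟩ ReflTransGen.refl))
    · exact Or.inl (hfull hsb)
  · rcases reflTransGen_or_le_tc hsup hda hab.le hbd' with hdb | hsb
    · exact Or.inr (heq ▸ le_tc hcd hdb)
    · exact Or.inl (hfull hsb)

theorem tc_isTreeInvSet (hI : IsMultiInvSet n s I)
    (hsup : IsSupOfPlanar s I) : IsTreeInvSet n s (tc I) :=
  ⟨tc_isMultiInvSet hI, tc_transitive, tc_planar hI.1 hsup⟩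

theorem IsMultiInvSet.invUnion {J : ℕ → ℕ → ℕ} (hI : IsMultiInvSet n s I)
    (hJ : IsMultiInvSet n s J) : IsMultiInvSet n s (invUnion I J) :=
  ⟨fun y x => max_le (hI.1 y x) (hJ.1 y x), fun y x h => by
    simp [STree.invUnion, hI.2 y x h, hJ.2 y x h]⟩

theorem isSupOfPlanar_invUnion {J : ℕ → ℕ → ℕ} (hI : InvPlanar s I) (hJ : InvPlanar s J) :
    IsSupOfPlanar s (invUnion I J) := by
  intro e d
  rcases le_total (I e d) (J e d) with h | h
  · exact ⟨J, hJ, fun y x => le_max_right _ _, (max_eq_right h).symm⟩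
  · exact ⟨I, hI, fun y x => le_max_left _ _, (max_eq_left h).symm⟩

end TransitiveClosure

theorem finite_setOf_isMultiInvSet (n : ℕ) (s : ℕ → ℕ) : {I | IsMultiInvSet n s I}.Finite := by
  set B := (Finset.range (n + 1)).sup s
  let extend : (Fin (n + 1) → Fin (n + 1) → Fin (B + 1)) → ℕ → ℕ → ℕ := fun g y x =>
    if h : y ≤ n ∧ x ≤ n then g ⟨y, by omega⟩ ⟨x, by omega⟩ else 0
  refine (Set.finite_range extend).subset fun I hI => ?_
  have hIB : ∀ y : Fin (n + 1), ∀ x, I y x < B + 1 := fun y x =>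
    Nat.lt_succ_of_le ((hI.1 y x).trans (Finset.le_sup (Finset.mem_range.2 y.2)))
  refine ⟨fun y x => ⟨I y x, hIB y x⟩, funext fun y => funext fun x => ?_⟩
  by_cases h : y ≤ n ∧ x ≤ n
  · simp [extend, h]
  · simp only [extend, dif_neg h]
    exact (hI.2 y x (by omega)).symm

variable {T R : STree}

theorem exists_join (hT : IsSDecreasingTree n s T) (hR : IsSDecreasingTree n s R) :
    ∃ J : STree, IsSDecreasingTree n s J ∧
      treeInv n s J = tc (invUnion (treeInv n s T) (treeInv n s R)) ∧
      sWeakLE n s T J ∧ sWeakLE n s R J ∧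
      ∀ K : STree, IsSDecreasingTree n s K →
        sWeakLE n s T K → sWeakLE n s R K → sWeakLE n s J K := by
  have hTs := treeInv_isTreeInvSet hT
  have hRs := treeInv_isTreeInvSet hR
  have hU := IsMultiInvSet.invUnion hTs.1 hRs.1
  obtain ⟨J, hJ, hJinv⟩ :=
    exists_treeInv_eq (tc_isTreeInvSet hU (isSupOfPlanar_invUnion hTs.2.2 hRs.2.2))
  have hUJ : invUnion (treeInv n s T) (treeInv n s R) ≤ treeInv n s J := hJinv ▸ le_tc_self hU
  refine ⟨J, hJ, hJinv, fun y x => (le_max_left _ _).trans (hUJ y x),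
    fun y x => (le_max_right _ _).trans (hUJ y x), fun K hK hTK hRK => ?_⟩
  change treeInv n s J ≤ treeInv n s K
  rw [hJinv]
  exact tc_le_of_le (fun y x => max_le (hTK y x) (hRK y x)) (treeInv_isTreeInvSet hK).2.1

theorem exists_meet (hT : IsSDecreasingTree n s T) (hR : IsSDecreasingTree n s R) :
    ∃ M : STree, IsSDecreasingTree n s M ∧
      sWeakLE n s M T ∧ sWeakLE n s M R ∧
      ∀ K : STree, IsSDecreasingTree n s K →
        sWeakLE n s K T → sWeakLE n s K R → sWeakLE n s K M := by
  set S := treeInv n s '' {T | IsSDecreasingTree n s T}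
  have hS : S.Finite := (finite_setOf_isMultiInvSet n s).subset <| by
    rintro _ ⟨T, hT, rfl⟩
    exact (treeInv_isTreeInvSet hT).1
  have hjoin : ∀ x ∈ S, ∀ y ∈ S, ∃ z ∈ S, x ≤ z ∧ y ≤ z ∧ ∀ w ∈ S, x ≤ w → y ≤ w → z ≤ w := by
    rintro _ ⟨T', hT', rfl⟩ _ ⟨R', hR', rfl⟩
    obtain ⟨J, hJ, -, hTJ, hRJ, hmin⟩ := exists_join hT' hR'
    exact ⟨_, ⟨J, hJ, rfl⟩, hTJ, hRJ, by rintro _ ⟨K, hK, rfl⟩; exact hmin K hK⟩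
  obtain ⟨B, hB, hB0⟩ := exists_treeInv_eq (n := n) (s := s) (I := 0)
    ⟨⟨fun _ _ => Nat.zero_le _, fun _ _ _ => rfl⟩, fun _ _ _ _ _ => Or.inl rfl,
      fun _ _ _ _ _ => Or.inr le_rfl⟩
  have hlow : ∃ b ∈ S, b ≤ treeInv n s T ∧ b ≤ treeInv n s R :=
    ⟨_, ⟨B, hB, rfl⟩, hB0 ▸ fun _ _ => Nat.zero_le _, hB0 ▸ fun _ _ => Nat.zero_le _⟩
  obtain ⟨_, ⟨M, hM, rfl⟩, hMT, hMR, hmax⟩ :=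
    hS.exists_meet_of_exists_join hjoin ⟨T, hT, rfl⟩ ⟨R, hR, rfl⟩ hlow
  exact ⟨M, hM, hMT, hMR, fun K hK hKT hKR => hmax _ ⟨K, hK, rfl⟩ hKT hKR⟩

end STree

open STree in
/-- The `s`-weak order on `s`-decreasing trees is a lattice: every pair of
trees has a least upper bound `J`, with `inv J = tc (inv T ∪ inv R)`, and a
greatest lower bound. -/
theorem sWeak_lattice (n : ℕ) (s : ℕ → ℕ) :
    ∀ T R : STree, IsSDecreasingTree n s T → IsSDecreasingTree n s R →
      (∃ J : STree, IsSDecreasingTree n s J ∧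
        treeInv n s J = tc (invUnion (treeInv n s T) (treeInv n s R)) ∧
        sWeakLE n s T J ∧ sWeakLE n s R J ∧
        (∀ K : STree, IsSDecreasingTree n s K →
          sWeakLE n s T K → sWeakLE n s R K → sWeakLE n s J K)) ∧
      (∃ M : STree, IsSDecreasingTree n s M ∧
        sWeakLE n s M T ∧ sWeakLE n s M R ∧
        (∀ K : STree, IsSDecreasingTree n s K →
          sWeakLE n s K T → sWeakLE n s K R → sWeakLE n s K M)) := by
  intro T R hT hR
  exact ⟨exists_join hT hR, exists_meet hT hR⟩
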